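/- arXiv:1408.5620 — 3 statements merged into one kernel-verified Lean document; each statement's English description precedes it below -/
import Mathlib

section
/- (Witt–Artin decomposition) Let W ⊆ V be any subspace, let E be a complement of W ∩ W^ω in W and let F be a complement of W ∩ W^ω in W^ω. Then E and F are symplectic subspaces (E ∩ E^ω = 0 and F ∩ F^ω = 0), E and F are ω-orthogonal, V is the internal direct sum V = E ⊕ F ⊕ (E ⊕ F)^ω, and W ∩ W^ω is a lagrangian subspace of the symplectic subspace G = (E ⊕ F)^ω, i.e. W ∩ W^ω = (W ∩ W^ω)^ω ∩ G. -/
/-!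
Write `K = W ∩ W^ω`. A vector of `E ∩ E^ω` is orthogonal to `E` and, lying in `W`, to `K ⊆ W^ω`;
hence it lies in `W ∩ W^ω = K`, and so vanishes. Since `W^ω ∩ W^ωω = K` as well, the same argument
applies to `F`. As `F ⊆ E^ω`, the modular law gives `(E ⊕ F) ∩ E^ω = F`, so `E ⊕ F` is symplectic
and `V = (E ⊕ F) ⊕ (E ⊕ F)^ω`. Finally `K^ω ∩ E^ω = (E + K)^ω = W^ω` and
`K^ω ∩ F^ω = (F + K)^ω = W^ωω = W`, so `K^ω ∩ (E ⊕ F)^ω = W^ω ∩ W = K`.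
-/

open Module

variable {V : Type*} [AddCommGroup V] [Module ℝ V]

/-- The symplectic orthogonal of a subspace `W`:
`{v ∈ V | ω v w = 0 for all w ∈ W}`. -/
def sorth (ω : LinearMap.BilinForm ℝ V) (W : Submodule ℝ V) : Submodule ℝ V where
  carrier := {v | ∀ w ∈ W, ω v w = 0}
  add_mem' := by
    intro a b ha hb w hw
    simp only [Set.mem_setOf_eq] at *
    simp [ha w hw, hb w hw]
  zero_mem' := by intro w hw; simp
  smul_mem' := by
    intro c a ha w hw
    simp only [Set.mem_setOf_eq] at *
    simp [ha w hw]

/-- Two subspaces are `ω`-orthogonal. -/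
def OrthSub (ω : LinearMap.BilinForm ℝ V) (E F : Submodule ℝ V) : Prop :=
  ∀ e ∈ E, ∀ f ∈ F, ω e f = 0

section sorth

variable {ω : LinearMap.BilinForm ℝ V}

lemma orthSub_iff_le_sorth {E F : Submodule ℝ V} : OrthSub ω E F ↔ E ≤ sorth ω F := Iff.rfl

lemma sorth_eq_orthogonal (hω : ω.IsRefl) (W : Submodule ℝ V) : sorth ω W = ω.orthogonal W := by
  ext x
  exact ⟨fun h w hw => hω _ _ (h w hw), fun h w hw => hω _ _ (h w hw)⟩

lemma le_sorth_comm (hω : ω.IsRefl) {A B : Submodule ℝ V} : A ≤ sorth ω B ↔ B ≤ sorth ω A :=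
  ⟨fun h _ hb _ ha => hω _ _ (h ha _ hb), fun h _ ha _ hb => hω _ _ (h hb _ ha)⟩

lemma sorth_antitone : Antitone (sorth ω) := fun _ _ h _ hx a ha => hx a (h ha)

lemma sorth_sup (A B : Submodule ℝ V) : sorth ω (A ⊔ B) = sorth ω A ⊓ sorth ω B := by
  refine le_antisymm (le_inf (sorth_antitone le_sup_left) (sorth_antitone le_sup_right)) ?_
  rintro x ⟨hxA, hxB⟩ w hw
  obtain ⟨a, ha, b, hb, rfl⟩ := Submodule.mem_sup.mp hw
  simp [hxA a ha, hxB b hb]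

lemma sorth_sorth [FiniteDimensional ℝ V] (hω : ω.Nondegenerate) (hrefl : ω.IsRefl)
    (W : Submodule ℝ V) : sorth ω (sorth ω W) = W := by
  rw [sorth_eq_orthogonal hrefl, sorth_eq_orthogonal hrefl]
  exact ω.orthogonal_orthogonal hω hrefl W

lemma sorth_inf_sorth_sorth [FiniteDimensional ℝ V] (hω : ω.Nondegenerate) (hrefl : ω.IsRefl)
    (W : Submodule ℝ V) : sorth ω W ⊓ sorth ω (sorth ω W) = W ⊓ sorth ω W := by
  rw [sorth_sorth hω hrefl, inf_comm]

lemma sup_sorth_eq_top_of_inf_sorth_eq_bot [FiniteDimensional ℝ V] (hrefl : ω.IsRefl)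
    {S : Submodule ℝ V} (hS : S ⊓ sorth ω S = ⊥) : S ⊔ sorth ω S = ⊤ := by
  rw [sorth_eq_orthogonal hrefl] at hS ⊢
  exact ((ω.isCompl_orthogonal_iff_disjoint hrefl).2 (disjoint_iff.2 hS)).codisjoint.eq_top

lemma inf_sorth_eq_bot_of_inf_eq_bot_of_sup_eq (hω : ω.IsRefl) {W E : Submodule ℝ V}
    (h₁ : E ⊓ (W ⊓ sorth ω W) = ⊥) (h₂ : E ⊔ (W ⊓ sorth ω W) = W) : E ⊓ sorth ω E = ⊥ := by
  have hEW : E ≤ W := h₂ ▸ le_sup_left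
  have hW : W ≤ sorth ω (W ⊓ sorth ω W) := (le_sorth_comm hω).1 inf_le_right
  have hsorth : E ⊓ sorth ω E ≤ sorth ω W :=
    calc E ⊓ sorth ω E ≤ sorth ω E ⊓ sorth ω (W ⊓ sorth ω W) :=
          le_inf inf_le_right (inf_le_left.trans (hEW.trans hW))
      _ = sorth ω W := by rw [← sorth_sup, h₂]
  exact eq_bot_iff.2 (h₁ ▸ le_inf inf_le_left (le_inf (inf_le_left.trans hEW) hsorth))

lemma sup_inf_sorth_sup_eq_bot (hω : ω.IsRefl) {E F : Submodule ℝ V} (hEF : OrthSub ω E F)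
    (hE : E ⊓ sorth ω E = ⊥) (hF : F ⊓ sorth ω F = ⊥) : (E ⊔ F) ⊓ sorth ω (E ⊔ F) = ⊥ := by
  have hFE : F ≤ sorth ω E := (le_sorth_comm hω).1 (orthSub_iff_le_sorth.1 hEF)
  calc (E ⊔ F) ⊓ sorth ω (E ⊔ F) = (F ⊔ E) ⊓ sorth ω E ⊓ sorth ω F := by
        rw [sorth_sup, sup_comm, inf_assoc]
    _ = F ⊓ sorth ω F := by rw [sup_inf_assoc_of_le E hFE, hE, sup_bot_eq]
    _ = ⊥ := hF

lemma sorth_inf_sorth_sup_eq [FiniteDimensional ℝ V] (hω : ω.Nondegenerate) (hrefl : ω.IsRefl)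
    {W E F K : Submodule ℝ V} (hE : E ⊔ K = W) (hF : F ⊔ K = sorth ω W) :
    sorth ω K ⊓ sorth ω (E ⊔ F) = W ⊓ sorth ω W :=
  calc sorth ω K ⊓ sorth ω (E ⊔ F)
      = (sorth ω E ⊓ sorth ω K) ⊓ (sorth ω F ⊓ sorth ω K) := by
        rw [sorth_sup, inf_inf_distrib_left, inf_comm _ (sorth ω E), inf_comm _ (sorth ω F)]
    _ = W ⊓ sorth ω W := by
        rw [← sorth_sup, ← sorth_sup, hE, hF, sorth_sorth hω hrefl, inf_comm]

end sorth

theorem witt_artin_decomposition [FiniteDimensional ℝ V]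
    (ω : LinearMap.BilinForm ℝ V) (hω : ω.Nondegenerate) (hωalt : ω.IsAlt)
    (W E F : Submodule ℝ V)
    (hE₁ : E ⊓ (W ⊓ sorth ω W) = ⊥) (hE₂ : E ⊔ (W ⊓ sorth ω W) = W)
    (hF₁ : F ⊓ (W ⊓ sorth ω W) = ⊥) (hF₂ : F ⊔ (W ⊓ sorth ω W) = sorth ω W) :
    E ⊓ sorth ω E = ⊥ ∧ F ⊓ sorth ω F = ⊥ ∧ OrthSub ω E F ∧
      E ⊓ F = ⊥ ∧ (E ⊔ F) ⊓ sorth ω (E ⊔ F) = ⊥ ∧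
      E ⊔ F ⊔ sorth ω (E ⊔ F) = ⊤ ∧
      W ⊓ sorth ω W = sorth ω (W ⊓ sorth ω W) ⊓ sorth ω (E ⊔ F) := by
  have hrefl := hωalt.isRefl
  have hEW : E ≤ W := hE₂ ▸ le_sup_left
  have hFW : F ≤ sorth ω W := hF₂ ▸ le_sup_left
  have hEs := inf_sorth_eq_bot_of_inf_eq_bot_of_sup_eq hrefl hE₁ hE₂
  have hFs : F ⊓ sorth ω F = ⊥ := by
    rw [← sorth_inf_sorth_sorth hω hrefl] at hF₁ hF₂
    exact inf_sorth_eq_bot_of_inf_eq_bot_of_sup_eq hrefl hF₁ hF₂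
  have hEF : OrthSub ω E F := orthSub_iff_le_sorth.2 (hEW.trans ((le_sorth_comm hrefl).1 hFW))
  have hEFs := sup_inf_sorth_sup_eq_bot hrefl hEF hEs hFs
  refine ⟨hEs, hFs, hEF, ?_, hEFs, sup_sorth_eq_top_of_inf_sorth_eq_bot hrefl hEFs, ?_⟩
  · exact eq_bot_iff.2 <| hE₁ ▸
      le_inf inf_le_left (le_inf (inf_le_left.trans hEW) (inf_le_right.trans hFW))
  · exact (sorth_inf_sorth_sup_eq hω hrefl hE₂ hF₂).symm
end

section
/- Let (A,B) be a coisotropic pair in (V,ω) with an elementary decomposition V = V₁ ⊕ ... ⊕ V₅, A = A₁ ⊕ ... ⊕ A₅, B = B₁ ⊕ ... ⊕ B₅ of types (λ, δ, σ, μ_B, μ_A), and set nᵢ = (1/2) dim Vᵢ. Then the canonical invariants satisfy: dim(A^ω ∩ B^ω) = n₁, dim A^ω = n₁ + n₂ + n₄, dim B^ω = n₁ + n₂ + n₅, (1/2) dim V = n₁ + n₂ + n₃ + n₄ + n₅, and dim(A^ω ∩ B) = n₁ + n₄. -/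
open Module

variable {V : Type*} [AddCommGroup V] [Module ℝ V]

/-- An elementary decomposition of a coisotropic pair `(A, B)`:
`V = V₁ ⊕ ⋯ ⊕ V₅` is an internal direct sum of pairwise `ω`-orthogonal symplectic
subspaces, `A = ⨁ Aᵢ`, `B = ⨁ Bᵢ` with `Aᵢ, Bᵢ ⊆ Vᵢ`, and the summand pairs are
of elementary types `(λ, δ, σ, μ_B, μ_A)` in this order. -/
def IsElemDecomp (ω : LinearMap.BilinForm ℝ V) (A B : Submodule ℝ V)
    (Vs As Bs : Fin 5 → Submodule ℝ V) : Prop :=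
  DirectSum.IsInternal Vs ∧
  (∀ i j, i ≠ j → OrthSub ω (Vs i) (Vs j)) ∧
  (∀ i, Vs i ⊓ sorth ω (Vs i) = ⊥) ∧
  (∀ i, As i ≤ Vs i) ∧ (∀ i, Bs i ≤ Vs i) ∧
  A = (⨆ i, As i) ∧ B = (⨆ i, Bs i) ∧
  -- type λ : A₁ = B₁ is lagrangian in V₁
  (As 0 = Bs 0 ∧ As 0 = sorth ω (As 0) ⊓ Vs 0) ∧
  -- type δ : A₂, B₂ lagrangian in V₂ with A₂ ⊓ B₂ = ⊥
  (As 1 = sorth ω (As 1) ⊓ Vs 1 ∧ Bs 1 = sorth ω (Bs 1) ⊓ Vs 1 ∧ As 1 ⊓ Bs 1 = ⊥) ∧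
  -- type σ : A₃ = B₃ = V₃
  (As 2 = Vs 2 ∧ Bs 2 = Vs 2) ∧
  -- type μ_B : B₄ = V₄ and A₄ lagrangian in V₄
  (Bs 3 = Vs 3 ∧ As 3 = sorth ω (As 3) ⊓ Vs 3) ∧
  -- type μ_A : A₅ = V₅ and B₅ lagrangian in V₅
  (As 4 = Vs 4 ∧ Bs 4 = sorth ω (Bs 4) ⊓ Vs 4)

/-!
Everything is computed summand by summand. Since the `Vᵢ` are pairwise `ω`-orthogonal and span
`V`, the symplectic orthogonal of `⨁ Wᵢ` with `Wᵢ ⊆ Vᵢ` is `⨁ (Wᵢ^ω ∩ Vᵢ)`, and since the sum is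
direct, intersections of such graded subspaces are formed componentwise. On a summand,
`Vᵢ^ω ∩ Vᵢ = 0`, and a lagrangian `L` of `Vᵢ` has `L^ω ∩ Vᵢ = L` and `dim L = nᵢ`, because
`dim (L^ω ∩ U) = dim U - dim L` for every symplectic `U ⊇ L`. So the components of `A^ω` are
`(A₁, A₂, 0, A₄, 0)`, those of `B^ω` are `(A₁, B₂, 0, 0, B₅)`, and all dimensions can be read off.
-/

namespace Submodule

theorem iSup_inf_iSup_of_iSupIndep {R M ι : Type*} [Ring R] [AddCommGroup M] [Module R M]
    {W C D : ι → Submodule R M} (hW : iSupIndep W) (hC : ∀ i, C i ≤ W i)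
    (hD : ∀ i, D i ≤ W i) :
    (⨆ i, C i) ⊓ (⨆ i, D i) = ⨆ i, C i ⊓ D i := by
  classical
  refine le_antisymm ?_ (iSup_le fun i => inf_le_inf (le_iSup C i) (le_iSup D i))
  rintro x ⟨hxC, hxD⟩
  obtain ⟨f, hf, rfl⟩ := (mem_iSup_iff_exists_finsupp C _).mp hxC
  obtain ⟨g, hg, hfg⟩ := (mem_iSup_iff_exists_finsupp D _).mp hxD
  have hsum : ∀ u : ι →₀ M, u.support ⊆ f.support ∪ g.support →
      (u.sum fun _ y => y) = ∑ i ∈ f.support ∪ g.support, u i := fun u hu =>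
    Finsupp.sum_of_support_subset u hu _ fun _ _ => rfl
  obtain rfl : f = g := by
    ext i
    by_cases hi : i ∈ f.support ∪ g.support
    · refine (iSupIndep_iff_finsetSum_eq_imp_eq W).mp hW _ f g
        (fun j _ => ⟨hC j (hf j), hD j (hg j)⟩) ?_ i hi
      rw [← hsum f Finset.subset_union_left, ← hsum g Finset.subset_union_right, hfg]
    · simp only [Finset.mem_union, Finsupp.mem_support_iff, not_or, not_not] at hi
      rw [hi.1, hi.2]
  exact (mem_iSup_iff_exists_finsupp _ _).mpr ⟨f, fun i => ⟨hf i, hg i⟩, rfl⟩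

theorem finrank_iSup_of_iSupIndep {K M ι : Type*} [DivisionRing K] [AddCommGroup M]
    [Module K M] [FiniteDimensional K M] [Fintype ι] {W : ι → Submodule K M}
    (hW : iSupIndep W) :
    finrank K (⨆ i, W i : Submodule K M) = ∑ i, finrank K (W i) := by
  classical
  rw [iSup_eq_range_dfinsupp_lsum, LinearMap.finrank_range_of_inj hW.dfinsupp_lsum_injective]
  exact finrank_directSum K fun i => W i

end Submodule

section Symplectic

variable {ω : LinearMap.BilinForm ℝ V}

lemma sorth_anti {W W' : Submodule ℝ V} (h : W ≤ W') : sorth ω W' ≤ sorth ω W :=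
  fun _ hv w hw => hv w (h hw)

lemma sorth_eq_flip_orthogonal (W : Submodule ℝ V) : sorth ω W = ω.flip.orthogonal W := rfl

lemma finrank_sorth_add_finrank [FiniteDimensional ℝ V] (hω : ω.Nondegenerate)
    (W : Submodule ℝ V) : finrank ℝ (sorth ω W) + finrank ℝ W = finrank ℝ V := by
  rw [sorth_eq_flip_orthogonal, LinearMap.BilinForm.finrank_orthogonal hω.flip]
  have := W.finrank_le
  omega

lemma finrank_sorth_inf_add_finrank [FiniteDimensional ℝ V] (hω : ω.Nondegenerate)
    {U L : Submodule ℝ V} (hU : U ⊓ sorth ω U = ⊥) (hLU : L ≤ U) :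
    finrank ℝ (sorth ω L ⊓ U : Submodule ℝ V) + finrank ℝ L = finrank ℝ U := by
  have hdimL := finrank_sorth_add_finrank hω L
  have hdimU := finrank_sorth_add_finrank hω U
  -- `≥`: `L^ω + U ⊆ V`; `≤`: `L^ω ∩ U` and `U^ω` are independent subspaces of `L^ω`.
  have hlower := Submodule.finrank_sup_add_finrank_inf_eq (sorth ω L) U
  have hsup_le := (sorth ω L ⊔ U).finrank_le
  have hdisj : sorth ω L ⊓ U ⊓ sorth ω U = ⊥ :=
    eq_bot_iff.mpr <| hU ▸ inf_le_inf_right _ inf_le_right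
  have hupper := Submodule.finrank_sup_add_finrank_inf_eq (sorth ω L ⊓ U) (sorth ω U)
  have hsup_le' := Submodule.finrank_mono
    (sup_le inf_le_left (sorth_anti hLU) : sorth ω L ⊓ U ⊔ sorth ω U ≤ sorth ω L)
  rw [hdisj, finrank_bot] at hupper
  omega

lemma two_mul_finrank_eq_of_isLagrangian [FiniteDimensional ℝ V] (hω : ω.Nondegenerate)
    {U L : Submodule ℝ V} (hU : U ⊓ sorth ω U = ⊥) (hL : L = sorth ω L ⊓ U) :
    2 * finrank ℝ L = finrank ℝ U := by
  have := finrank_sorth_inf_add_finrank hω hU (hL.le.trans inf_le_right)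
  rw [← hL] at this
  omega

lemma sorth_iSup_eq_iSup_sorth_inf {ι : Type*} {Vs Ws : ι → Submodule ℝ V}
    (htop : ⨆ i, Vs i = ⊤) (horth : ∀ i j, i ≠ j → OrthSub ω (Vs i) (Vs j))
    (hWs : ∀ i, Ws i ≤ Vs i) :
    sorth ω (⨆ i, Ws i) = ⨆ i, sorth ω (Ws i) ⊓ Vs i := by
  refine le_antisymm ?_ (iSup_le fun i v ⟨hv, hvV⟩ w hw => ?_)
  · intro v hv
    obtain ⟨f, hf, rfl⟩ :=
      (Submodule.mem_iSup_iff_exists_finsupp Vs v).mp (htop ▸ Submodule.mem_top)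
    refine (Submodule.mem_iSup_iff_exists_finsupp _ _).mpr
      ⟨f, fun i => ⟨fun w hw => ?_, hf i⟩, rfl⟩
    have hvw := hv w (Submodule.mem_iSup_of_mem i hw)
    rwa [map_finsuppSum, LinearMap.finsupp_sum_apply, Finsupp.sum_eq_single i
      (fun j _ hji => horth j i hji _ (hf j) w (hWs i hw)) (by simp)] at hvw
  · induction hw using Submodule.iSup_induction' with
    | mem j w hw =>
      rcases eq_or_ne i j with rfl | hij
      · exact hv w hw
      · exact horth i j hij v hvV w (hWs j hw)
    | zero => exact map_zero _
    | add w w' _ _ h h' => rw [map_add, h, h', add_zero]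

end Symplectic
namespace IsElemDecomp

variable {ω : LinearMap.BilinForm ℝ V} {A B : Submodule ℝ V} {Vs As Bs : Fin 5 → Submodule ℝ V}

lemma sorth_left (h : IsElemDecomp ω A B Vs As Bs) :
    sorth ω A = ⨆ i, sorth ω (As i) ⊓ Vs i := by
  have ⟨hint, horth, _, hAs, _, hA, _⟩ := h
  rw [hA]
  exact sorth_iSup_eq_iSup_sorth_inf hint.submodule_iSup_eq_top horth hAs

lemma sorth_right (h : IsElemDecomp ω A B Vs As Bs) :
    sorth ω B = ⨆ i, sorth ω (Bs i) ⊓ Vs i := by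
  have ⟨hint, horth, _, _, hBs, _, hB, _⟩ := h
  rw [hB]
  exact sorth_iSup_eq_iSup_sorth_inf hint.submodule_iSup_eq_top horth hBs

lemma sorth_inf_self (h : IsElemDecomp ω A B Vs As Bs) (i : Fin 5) :
    sorth ω (Vs i) ⊓ Vs i = ⊥ := by
  rw [inf_comm]
  exact h.2.2.1 i

variable [FiniteDimensional ℝ V] {n : Fin 5 → ℕ}

lemma finrank_iSup_of_le (h : IsElemDecomp ω A B Vs As Bs) {X : Fin 5 → Submodule ℝ V}
    (hX : ∀ i, X i ≤ Vs i) :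
    finrank ℝ (⨆ i, X i : Submodule ℝ V) =
      finrank ℝ (X 0) + finrank ℝ (X 1) + finrank ℝ (X 2) + finrank ℝ (X 3) + finrank ℝ (X 4) := by
  rw [Submodule.finrank_iSup_of_iSupIndep (h.1.submodule_iSupIndep.mono hX), Fin.sum_univ_five]

lemma finrank_eq (h : IsElemDecomp ω A B Vs As Bs) (hn : ∀ i, finrank ℝ (Vs i) = 2 * n i) :
    finrank ℝ V = 2 * (n 0 + n 1 + n 2 + n 3 + n 4) := by
  rw [← finrank_top ℝ V, ← h.1.submodule_iSup_eq_top, h.finrank_iSup_of_le fun _ => le_rfl,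
    hn 0, hn 1, hn 2, hn 3, hn 4]
  ring

lemma finrank_of_isLagrangian (h : IsElemDecomp ω A B Vs As Bs) (hω : ω.Nondegenerate)
    (hn : ∀ i, finrank ℝ (Vs i) = 2 * n i) {i : Fin 5} {L : Submodule ℝ V}
    (hL : L = sorth ω L ⊓ Vs i) : finrank ℝ L = n i := by
  have := two_mul_finrank_eq_of_isLagrangian hω (h.2.2.1 i) hL
  have := hn i
  omega

lemma finrank_sorth_left (h : IsElemDecomp ω A B Vs As Bs) (hω : ω.Nondegenerate)
    (hn : ∀ i, finrank ℝ (Vs i) = 2 * n i) :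
    finrank ℝ (sorth ω A) = n 0 + n 1 + n 3 := by
  have ⟨_, _, _, _, _, _, _, ⟨_, hlag0⟩, ⟨hlag1, _, _⟩, ⟨hA2, _⟩, ⟨_, hlag3⟩, ⟨hA4, _⟩⟩ := h
  rw [h.sorth_left, h.finrank_iSup_of_le fun _ => inf_le_right, ← hlag0, ← hlag1, ← hlag3,
    hA2, hA4, h.sorth_inf_self, h.sorth_inf_self, h.finrank_of_isLagrangian hω hn hlag0,
    h.finrank_of_isLagrangian hω hn hlag1, h.finrank_of_isLagrangian hω hn hlag3, finrank_bot]
  simp only [add_zero]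

lemma finrank_sorth_right (h : IsElemDecomp ω A B Vs As Bs) (hω : ω.Nondegenerate)
    (hn : ∀ i, finrank ℝ (Vs i) = 2 * n i) :
    finrank ℝ (sorth ω B) = n 0 + n 1 + n 4 := by
  have ⟨_, _, _, _, _, _, _, ⟨hAB0, hlag0⟩, ⟨_, hlag1, _⟩, ⟨_, hB2⟩, ⟨hB3, _⟩, ⟨_, hlag4⟩⟩ := h
  rw [h.sorth_right, h.finrank_iSup_of_le fun _ => inf_le_right, ← hAB0, ← hlag0, ← hlag1,
    ← hlag4, hB2, hB3, h.sorth_inf_self, h.sorth_inf_self, h.finrank_of_isLagrangian hω hn hlag0,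
    h.finrank_of_isLagrangian hω hn hlag1, h.finrank_of_isLagrangian hω hn hlag4, finrank_bot]
  simp only [add_zero]

lemma finrank_sorth_left_inf_sorth_right (h : IsElemDecomp ω A B Vs As Bs)
    (hω : ω.Nondegenerate) (hn : ∀ i, finrank ℝ (Vs i) = 2 * n i) :
    finrank ℝ (sorth ω A ⊓ sorth ω B : Submodule ℝ V) = n 0 := by
  have ⟨hint, _, _, _, _, _, _, ⟨hAB0, hlag0⟩, ⟨hlagA1, hlagB1, hdisj1⟩, ⟨hA2, hB2⟩,
    ⟨hB3, hlag3⟩, ⟨hA4, hlag4⟩⟩ := h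
  rw [h.sorth_left, h.sorth_right, Submodule.iSup_inf_iSup_of_iSupIndep
      hint.submodule_iSupIndep (fun _ => inf_le_right) (fun _ => inf_le_right),
    h.finrank_iSup_of_le fun _ => inf_le_left.trans inf_le_right, ← hAB0, ← hlag0, ← hlagA1,
    ← hlagB1, ← hlag3, ← hlag4, hA2, hB2, hB3, hA4, h.sorth_inf_self, h.sorth_inf_self,
    h.sorth_inf_self, inf_idem, hdisj1, bot_inf_eq, inf_bot_eq, bot_inf_eq, finrank_bot,
    h.finrank_of_isLagrangian hω hn hlag0]
  simp only [add_zero]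

lemma finrank_sorth_left_inf_right (h : IsElemDecomp ω A B Vs As Bs) (hω : ω.Nondegenerate)
    (hn : ∀ i, finrank ℝ (Vs i) = 2 * n i) :
    finrank ℝ (sorth ω A ⊓ B : Submodule ℝ V) = n 0 + n 3 := by
  have ⟨hint, _, _, hAs, hBs, _, hB, ⟨hAB0, hlag0⟩, ⟨hlag1, _, hdisj1⟩, ⟨hA2, _⟩,
    ⟨hB3, hlag3⟩, ⟨hA4, _⟩⟩ := h
  rw [h.sorth_left, hB, Submodule.iSup_inf_iSup_of_iSupIndep hint.submodule_iSupIndep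
      (fun _ => inf_le_right) hBs,
    h.finrank_iSup_of_le fun _ => inf_le_left.trans inf_le_right, ← hAB0, ← hlag0, ← hlag1,
    ← hlag3, hA2, hA4, hB3, h.sorth_inf_self, h.sorth_inf_self, inf_idem, hdisj1,
    inf_eq_left.mpr (hAs 3), bot_inf_eq, bot_inf_eq, finrank_bot,
    h.finrank_of_isLagrangian hω hn hlag0, h.finrank_of_isLagrangian hω hn hlag3]
  simp only [add_zero]

end IsElemDecomp

theorem canonical_invariants_from_elementary_invariants_general [FiniteDimensional ℝ V]
    (ω : LinearMap.BilinForm ℝ V) (hω : ω.Nondegenerate)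
    (A B : Submodule ℝ V)
    (Vs As Bs : Fin 5 → Submodule ℝ V)
    (hdec : IsElemDecomp ω A B Vs As Bs)
    (n : Fin 5 → ℕ) (hn : ∀ i, finrank ℝ (Vs i) = 2 * n i) :
    finrank ℝ (sorth ω A ⊓ sorth ω B : Submodule ℝ V) = n 0 ∧
      finrank ℝ (sorth ω A) = n 0 + n 1 + n 3 ∧
      finrank ℝ (sorth ω B) = n 0 + n 1 + n 4 ∧
      finrank ℝ V = 2 * (n 0 + n 1 + n 2 + n 3 + n 4) ∧
      finrank ℝ (sorth ω A ⊓ B : Submodule ℝ V) = n 0 + n 3 :=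
  ⟨hdec.finrank_sorth_left_inf_sorth_right hω hn, hdec.finrank_sorth_left hω hn,
    hdec.finrank_sorth_right hω hn, hdec.finrank_eq hn, hdec.finrank_sorth_left_inf_right hω hn⟩

theorem canonical_invariants_from_elementary_invariants [FiniteDimensional ℝ V]
    (ω : LinearMap.BilinForm ℝ V) (hω : ω.Nondegenerate) (hωalt : ω.IsAlt)
    (A B : Submodule ℝ V) (hA : sorth ω A ≤ A) (hB : sorth ω B ≤ B)
    (Vs As Bs : Fin 5 → Submodule ℝ V)
    (hdec : IsElemDecomp ω A B Vs As Bs)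
    (n : Fin 5 → ℕ) (hn : ∀ i, finrank ℝ (Vs i) = 2 * n i) :
    finrank ℝ (sorth ω A ⊓ sorth ω B : Submodule ℝ V) = n 0 ∧
      finrank ℝ (sorth ω A) = n 0 + n 1 + n 3 ∧
      finrank ℝ (sorth ω B) = n 0 + n 1 + n 4 ∧
      finrank ℝ V = 2 * (n 0 + n 1 + n 2 + n 3 + n 4) ∧
      finrank ℝ (sorth ω A ⊓ B : Submodule ℝ V) = n 0 + n 3 :=
  canonical_invariants_from_elementary_invariants_general ω hω A B Vs As Bs hdec n hn
end

section
/- (Realizability of canonical invariants) Let k₁, k₂, k₃, k₄, k₅ be natural numbers satisfying k₁ ≤ k₅ ≤ k₂ and k₁ + k₂ ≤ k₃ + k₅ ≤ k₁ + k₄. Then there exist a finite-dimensional real vector space V of dimension 2k₄, a nondegenerate alternating bilinear form ω on V, and coisotropic subspaces A, B ⊆ V such that dim(A^ω ∩ B^ω) = k₁, dim A^ω = k₂, dim B^ω = k₃, and dim(A^ω ∩ B) = k₅. -/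
open Module

variable {V : Type*} [AddCommGroup V] [Module ℝ V]

/-! Work in Darboux coordinates on `ℝ^(ι ⊕ ι)`, with `ω` the form of `Matrix.J`, so that
`e_i = Pi.single (inl i) 1` and `f_i = Pi.single (inr i) 1` pair only with each other. Then the
`ω`-orthogonal of the coordinate subspace indexed by `t` is the coordinate subspace indexed by the
complement of `Sum.swap ⁻¹' t`. Taking `A`, `B` to be the orthogonals of isotropic coordinate
subspaces turns every invariant into the cardinality of an index set, and
`A^ω = ⟨e_i : i < k₂⟩`, `B^ω = ⟨e_i : i < k₁⟩ ⊕ ⟨f_i : k₅ ≤ i < k₃ + k₅ - k₁⟩` have the prescribed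
invariants. -/

open Matrix

section CoordSubspace

variable (R : Type*) {κ : Type*} [Semiring R]

def coordSubspace (t : Set κ) : Submodule R (κ → R) :=
  ⨅ i ∈ tᶜ, LinearMap.ker (LinearMap.proj i)

variable {R} {s t : Set κ}

theorem mem_coordSubspace {v : κ → R} : v ∈ coordSubspace R t ↔ ∀ i ∉ t, v i = 0 := by
  simp [coordSubspace]

theorem coordSubspace_mono (h : s ⊆ t) : coordSubspace R s ≤ coordSubspace R t := fun _ hv =>
  mem_coordSubspace.2 fun i hi => mem_coordSubspace.1 hv i fun hs => hi (h hs)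

theorem coordSubspace_inf : coordSubspace R s ⊓ coordSubspace R t = coordSubspace R (s ∩ t) := by
  ext v
  simp only [Submodule.mem_inf, mem_coordSubspace, Set.mem_inter_iff, not_and_or]
  grind

theorem single_mem_coordSubspace [DecidableEq κ] {i : κ} (hi : i ∈ t) :
    Pi.single i (1 : R) ∈ coordSubspace R t :=
  mem_coordSubspace.2 fun _ hj => Pi.single_eq_of_ne (by rintro rfl; exact hj hi) _

theorem finrank_coordSubspace [Finite κ] [StrongRankCondition R] (t : Set κ) :
    finrank R (coordSubspace R t) = t.ncard := by
  classical
  have := Fintype.ofFinite κ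
  rw [coordSubspace, (LinearMap.iInfKerProjEquiv R (fun _ => R) (disjoint_compl_right (a := t))
    (by simp)).finrank_eq, finrank_pi, ← Nat.card_coe_set_eq, Nat.card_eq_fintype_card]

end CoordSubspace

theorem mem_sorth_toBilin'_coordSubspace {κ : Type*} [Fintype κ] [DecidableEq κ]
    (M : Matrix κ κ ℝ) (t : Set κ) (v : κ → ℝ) :
    v ∈ sorth M.toBilin' (coordSubspace ℝ t) ↔ ∀ j ∈ t, (v ᵥ* M) j = 0 := by
  refine ⟨fun hv j hj => ?_, fun hv w hw => ?_⟩
  · simpa only [toBilin'_apply', dotProduct_mulVec, dotProduct_single_one] using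
      hv _ (single_mem_coordSubspace hj)
  · rw [toBilin'_apply', dotProduct_mulVec]
    refine Finset.sum_eq_zero fun j _ => ?_
    by_cases hj : j ∈ t
    · rw [hv j hj, zero_mul]
    · rw [mem_coordSubspace.1 hw j hj, mul_zero]

section Darboux

variable {ι : Type*} [Fintype ι] [DecidableEq ι]

theorem Matrix.vecMul_J {R : Type*} [CommRing R] (v : ι ⊕ ι → R) :
    v ᵥ* J ι R = Sum.elim (v ∘ Sum.inr) (-(v ∘ Sum.inl)) := by
  simp [J, vecMul_fromBlocks, vecMul_neg]

theorem Matrix.isAlt_toBilin'_J {R : Type*} [CommRing R] : (J ι R).toBilin'.IsAlt := by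
  intro v
  rw [toBilin'_apply', dotProduct_mulVec, vecMul_J]
  simp [dotProduct, Fintype.sum_sum_type, mul_comm]

theorem Matrix.nondegenerate_toBilin'_J {R : Type*} [CommRing R] [IsDomain R] :
    (J ι R).toBilin'.Nondegenerate :=
  LinearMap.BilinForm.nondegenerate_toBilin'_iff_det_ne_zero.2 (isUnit_det_J ι R).ne_zero

theorem sorth_toBilin'_J_coordSubspace (t : Set (ι ⊕ ι)) :
    sorth (J ι ℝ).toBilin' (coordSubspace ℝ t) = coordSubspace ℝ (Sum.swap ⁻¹' t)ᶜ := by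
  ext v
  rw [mem_sorth_toBilin'_coordSubspace, mem_coordSubspace]
  simp [vecMul_J, Sum.forall, and_comm]

theorem sorth_sorth_toBilin'_J_coordSubspace (t : Set (ι ⊕ ι)) :
    sorth (J ι ℝ).toBilin' (sorth (J ι ℝ).toBilin' (coordSubspace ℝ t)) =
      coordSubspace ℝ t := by
  simp only [sorth_toBilin'_J_coordSubspace, Set.preimage_compl, Set.preimage_preimage,
    Sum.swap_swap, Set.preimage_id', compl_compl]

theorem coordSubspace_le_sorth_toBilin'_J {t : Set (ι ⊕ ι)} (ht : Disjoint t (Sum.swap ⁻¹' t)) :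
    coordSubspace ℝ t ≤ sorth (J ι ℝ).toBilin' (coordSubspace ℝ t) := by
  rw [sorth_toBilin'_J_coordSubspace]
  exact coordSubspace_mono ht.subset_compl_right

end Darboux

theorem Set.ncard_image_inl_union_image_inr {α β : Type*} [Finite α] [Finite β]
    (s : Set α) (t : Set β) :
    (Sum.inl '' s ∪ Sum.inr '' t : Set (α ⊕ β)).ncard = s.ncard + t.ncard := by
  rw [ncard_union_eq disjoint_image_inl_image_inr, ncard_image_of_injective _ Sum.inl_injective,
    ncard_image_of_injective _ Sum.inr_injective]

theorem Fin.ncard_preimage_val_Ico {n a b : ℕ} (hb : b ≤ n) :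
    (Fin.val ⁻¹' Set.Ico a b : Set (Fin n)).ncard = b - a := by
  rw [Set.ncard_preimage_of_injective_subset_range Fin.val_injective, Set.ncard_Ico_nat]
  intro i hi
  exact ⟨⟨i, by grind⟩, rfl⟩

theorem exists_isotropic_index_sets {k₁ k₂ k₃ k₄ k₅ : ℕ} (h₁ : k₁ ≤ k₅) (h₂ : k₅ ≤ k₂)
    (h₃ : k₁ + k₂ ≤ k₃ + k₅) (h₄ : k₃ + k₅ ≤ k₁ + k₄) :
    ∃ a b : Set (Fin k₄ ⊕ Fin k₄), Disjoint a (Sum.swap ⁻¹' a) ∧ Disjoint b (Sum.swap ⁻¹' b) ∧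
      (a ∩ b).ncard = k₁ ∧ a.ncard = k₂ ∧ b.ncard = k₃ ∧ (a \ Sum.swap ⁻¹' b).ncard = k₅ := by
  let a : Set (Fin k₄ ⊕ Fin k₄) := Sum.inl '' (Fin.val ⁻¹' Set.Ico 0 k₂) ∪ Sum.inr '' ∅
  let b : Set (Fin k₄ ⊕ Fin k₄) :=
    Sum.inl '' (Fin.val ⁻¹' Set.Ico 0 k₁) ∪ Sum.inr '' (Fin.val ⁻¹' Set.Ico k₅ (k₃ + k₅ - k₁))
  have h_inter : a ∩ b = Sum.inl '' (Fin.val ⁻¹' Set.Ico 0 k₁) ∪ Sum.inr '' ∅ := by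
    ext (i | i) <;> simp [a, b]; omega
  have h_diff : a \ Sum.swap ⁻¹' b = Sum.inl '' (Fin.val ⁻¹' Set.Ico 0 k₅) ∪ Sum.inr '' ∅ := by
    ext (i | i) <;> simp [a, b]; omega
  refine ⟨a, b, ?_, ?_, ?_, ?_, ?_, ?_⟩
  · rw [Set.disjoint_left]; rintro (i | i) <;> simp [a]
  · rw [Set.disjoint_left]; rintro (i | i) <;> simp [b] <;> omega
  all_goals
    simp only [h_inter, h_diff, a, b, Set.ncard_image_inl_union_image_inr, Set.ncard_empty]
    repeat rw [Fin.ncard_preimage_val_Ico (by omega)]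
    omega

theorem canonical_invariants_realizable (k₁ k₂ k₃ k₄ k₅ : ℕ)
    (h₁ : k₁ ≤ k₅) (h₂ : k₅ ≤ k₂)
    (h₃ : k₁ + k₂ ≤ k₃ + k₅) (h₄ : k₃ + k₅ ≤ k₁ + k₄) :
    ∃ (W : Type) (_ : AddCommGroup W) (_ : Module ℝ W) (_ : FiniteDimensional ℝ W)
      (ω : LinearMap.BilinForm ℝ W) (A B : Submodule ℝ W),
      ω.Nondegenerate ∧ ω.IsAlt ∧
      finrank ℝ W = 2 * k₄ ∧
      sorth ω A ≤ A ∧ sorth ω B ≤ B ∧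
      finrank ℝ (sorth ω A ⊓ sorth ω B : Submodule ℝ W) = k₁ ∧
      finrank ℝ (sorth ω A) = k₂ ∧
      finrank ℝ (sorth ω B) = k₃ ∧
      finrank ℝ (sorth ω A ⊓ B : Submodule ℝ W) = k₅ := by
  obtain ⟨a, b, ha, hb, hab, hA, hB, hAB⟩ := exists_isotropic_index_sets h₁ h₂ h₃ h₄
  refine ⟨Fin k₄ ⊕ Fin k₄ → ℝ, inferInstance, inferInstance, inferInstance,
    (J (Fin k₄) ℝ).toBilin', sorth (J (Fin k₄) ℝ).toBilin' (coordSubspace ℝ a),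
    sorth (J (Fin k₄) ℝ).toBilin' (coordSubspace ℝ b), nondegenerate_toBilin'_J,
    isAlt_toBilin'_J, by simp [two_mul], ?_, ?_, ?_, ?_, ?_, ?_⟩ <;>
    rw [sorth_sorth_toBilin'_J_coordSubspace]
  · exact coordSubspace_le_sorth_toBilin'_J ha
  · exact coordSubspace_le_sorth_toBilin'_J hb
  · rw [sorth_sorth_toBilin'_J_coordSubspace, coordSubspace_inf, finrank_coordSubspace, hab]
  · rw [finrank_coordSubspace, hA]
  · rw [finrank_coordSubspace, hB]
  · rw [sorth_toBilin'_J_coordSubspace, coordSubspace_inf, finrank_coordSubspace, ← Set.sdiff_eq,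
      hAB]
end
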